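/- For any positive integers q, k, and t, there exists a constant f(q, k, t) such that the following holds. Let D = (V, A) be a Steiner rooted k-arc-connected directed graph with root r and a set S ⊆ V − r of t terminals. Let 𝒞 be a family of pairwise vertex-disjoint directed cycles in D such that |𝒞| ≥ f(q, k, t) and each C ∈ 𝒞 is s-essential for every s ∈ S. Then there exist cycles C_1, …, C_q ∈ 𝒞 such that for every s ∈ S, either (C_1, …, C_q) or (C_q, …, C_1) forms an s-ordered sequence of directed cycles. -/

import Mathlib

/-- A finite loopless directed multigraph on vertex set `verts`; the arcs are
recorded as a multiset of ordered pairs `(tail, head)`, so that parallel arcs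
are allowed. -/
structure MDigraph (α : Type) where
  verts : Finset α
  arcs : Multiset (α × α)
  tail_mem : ∀ e ∈ arcs, e.1 ∈ verts
  head_mem : ∀ e ∈ arcs, e.2 ∈ verts
  loopless : ∀ e ∈ arcs, e.1 ≠ e.2

namespace MDigraph

variable {α : Type} [DecidableEq α]

/-- `p` is the vertex sequence of a directed path in `D` from `u` to `v`. -/
def IsDipath (D : MDigraph α) (p : List α) (u v : α) : Prop :=
  p.Nodup ∧ p.head? = some u ∧ p.getLast? = some v ∧
    (∀ x ∈ p, x ∈ D.verts) ∧ List.Chain' (fun x y => (x, y) ∈ D.arcs) p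

/-- The multiset of arcs traversed by a directed path given by its vertex sequence. -/
def pathArcs (p : List α) : Multiset (α × α) := ↑(p.zip p.tail)

/-- There exist `k` pairwise arc-disjoint directed paths from `u` to `v` in `D`
(each copy of an arc may be used by at most one of the paths). -/
def HasArcDisjointPaths (D : MDigraph α) (u v : α) (k : ℕ) : Prop :=
  ∃ P : Fin k → List α, (∀ i, D.IsDipath (P i) u v) ∧
    (∑ i : Fin k, pathArcs (P i)) ≤ D.arcs

/-- `D` is Steiner rooted `k`-arc-connected with root `r` and terminal set `S`:
for every terminal `s ∈ S` there are `k` pairwise arc-disjoint directed `r`-`s` paths. -/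
def SteinerRooted (D : MDigraph α) (r : α) (S : Finset α) (k : ℕ) : Prop :=
  ∀ s ∈ S, D.HasArcDisjointPaths r s k

/-- The in-degree of a vertex. -/
def inDeg (D : MDigraph α) (v : α) : ℕ := (D.arcs.filter (fun e => e.2 = v)).card

/-- The out-degree of a vertex. -/
def outDeg (D : MDigraph α) (v : α) : ℕ := (D.arcs.filter (fun e => e.1 = v)).card

/-- The number of arcs leaving the vertex set `X` (tail in `X`, head outside `X`). -/
def outDegOf (D : MDigraph α) (X : Finset α) : ℕ :=
  (D.arcs.filter (fun e => e.1 ∈ X ∧ e.2 ∉ X)).card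

/-- `D` is `3`-regular with respect to root `r`, terminal set `S` and connectivity `k`:
the root has in-degree `0` and out-degree `k`, every terminal has in-degree `k` and
out-degree `0`, and every other vertex has in-degree plus out-degree equal to `3`. -/
def ThreeRegular (D : MDigraph α) (r : α) (S : Finset α) (k : ℕ) : Prop :=
  D.inDeg r = 0 ∧ D.outDeg r = k ∧ (∀ s ∈ S, D.inDeg s = k ∧ D.outDeg s = 0) ∧
    ∀ v ∈ D.verts, v ≠ r → v ∉ S → D.inDeg v + D.outDeg v = 3

/-- Delete (one copy of) the arc `e` from `D`. -/
def delArc (D : MDigraph α) (e : α × α) : MDigraph α where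
  verts := D.verts
  arcs := D.arcs.erase e
  tail_mem := fun a ha => D.tail_mem a (Multiset.mem_of_mem_erase ha)
  head_mem := fun a ha => D.head_mem a (Multiset.mem_of_mem_erase ha)
  loopless := fun a ha => D.loopless a (Multiset.mem_of_mem_erase ha)

/-- `D` is minimally Steiner rooted `k`-arc-connected: it is Steiner rooted
`k`-arc-connected but deleting any arc destroys this property. -/
def MinSteinerRooted (D : MDigraph α) (r : α) (S : Finset α) (k : ℕ) : Prop :=
  D.SteinerRooted r S k ∧ ∀ e ∈ D.arcs, ¬ (D.delArc e).SteinerRooted r S k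

/-- `U` is a tight `s`-cut: `r ∈ U`, `s ∉ U`, and exactly `k` arcs leave `U`. -/
def IsTightCut (D : MDigraph α) (r s : α) (k : ℕ) (U : Finset α) : Prop :=
  r ∈ U ∧ s ∉ U ∧ D.outDegOf U = k

/-- The multiset of arcs of a directed cycle given by its vertex sequence. -/
def cycleArcs (c : List α) : Multiset (α × α) := ↑(c.zip (c.rotate 1))

/-- `c` is the vertex sequence of a directed cycle in `D`. -/
def IsDicycle (D : MDigraph α) (c : List α) : Prop :=
  c.Nodup ∧ 2 ≤ c.length ∧ cycleArcs c ≤ D.arcs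

end MDigraph

namespace MDigraph

variable {α : Type} [DecidableEq α]

/-- A vertex set `U` properly intersects a directed cycle (given by its vertex
sequence `c`) if both `V(c) ∩ U` and `V(c) \ U` are nonempty. -/
def ProperlyIntersects (U : Finset α) (c : List α) : Prop :=
  (∃ x ∈ c, x ∈ U) ∧ ∃ x ∈ c, x ∉ U

/-- A directed cycle `c` is `s`-essential if some tight `s`-cut properly intersects it. -/
def IsEssential (D : MDigraph α) (r s : α) (k : ℕ) (c : List α) : Prop :=
  ∃ U : Finset α, D.IsTightCut r s k U ∧ ProperlyIntersects U c

/-- The sequence `C 0, …, C (q-1)` of directed cycles is `s`-ordered: there are tight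
`s`-cuts `U i` such that `V(C i) ⊆ U j` for `i < j`, `V(C i) ∩ U j = ∅` for `i > j`,
and `U i` properly intersects `C i` for every `i`. -/
def IsOrderedSeq (D : MDigraph α) (r s : α) (k : ℕ) {q : ℕ} (C : Fin q → List α) : Prop :=
  ∃ U : Fin q → Finset α, (∀ i, D.IsTightCut r s k (U i)) ∧
    (∀ i j : Fin q, i < j → ∀ x ∈ C i, x ∈ U j) ∧
    (∀ i j : Fin q, j < i → ∀ x ∈ C i, x ∉ U j) ∧
    ∀ i, ProperlyIntersects (U i) (C i)

end MDigraph

/-!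
Tight `s`-cuts are closed under `∩` and `∪`: the out-degree is submodular and, by the `k`
arc-disjoint paths, at least `k` on every `s`-cut. A tight cut properly intersects at most `k`
of the disjoint cycles, each of which needs its own leaving arc. A maximal chain of tight cuts
properly intersects every `s`-essential cycle, and the members properly intersecting a fixed
cycle form an interval of the chain; a greedy choice among these intervals, which have depth at
most `k`, turns `q (k + 1)` cycles into an `s`-ordered sequence of length `q`. For several
terminals we treat them one at a time, passing by Erdős–Szekeres to a subsequence on which the
order for the new terminal is monotone, so that every earlier terminal still sees the sequence
ordered up to reversal.
-/

theorem List.isChain_of_forall_mem_zip_tail {α : Type*} {R : α → α → Prop} :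
    ∀ {l : List α}, (∀ e ∈ l.zip l.tail, R e.1 e.2) → l.IsChain R
  | [], _ => .nil
  | [_], _ => .singleton _
  | a :: b :: l, h => by
    simp only [List.tail_cons, List.zip_cons_cons, List.mem_cons, forall_eq_or_imp] at h
    exact List.IsChain.cons_cons h.1 (isChain_of_forall_mem_zip_tail h.2)

theorem List.exists_mem_zip_tail_leaving {α : Type*} {p : α → Prop} {l : List α} {a b : α}
    (ha : l.head? = some a) (hpa : p a) (hb : b ∈ l) (hpb : ¬ p b) :
    ∃ e ∈ l.zip l.tail, p e.1 ∧ ¬ p e.2 := by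
  obtain ⟨t, rfl⟩ := List.head?_eq_some_iff.1 ha
  by_contra! h
  exact hpb (List.IsChain.induction p _ (isChain_of_forall_mem_zip_tail (R := (p · → p ·)) h)
    (fun _ _ hab => hab) (fun _ => hpa) b hb)

theorem Multiset.finsetSum_le_of_pairwiseDisjoint {α ι : Type*} [DecidableEq α] {F : Finset ι}
    {A : ι → Multiset α} {t : Multiset α} (hle : ∀ i ∈ F, A i ≤ t)
    (hdisj : (F : Set ι).PairwiseDisjoint A) : ∑ i ∈ F, A i ≤ t := by
  classical
  induction F using Finset.induction_on with
  | empty => simp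
  | insert a F ha ih =>
    rw [Finset.sum_insert ha, Multiset.add_eq_union_iff_disjoint.2]
    · simp only [Finset.coe_insert] at hdisj
      exact Multiset.union_le (hle a (by simp))
        (ih (fun i hi => hle i (by simp [hi])) (hdisj.subset (by simp)))
    · refine Multiset.disjoint_finsetSum_right.2 fun i hi => ?_
      simp only [Finset.coe_insert] at hdisj
      exact hdisj (by simp) (by simp [hi]) (by rintro rfl; exact ha hi)

theorem Finset.exists_maximal_isChain {β : Type*} [PartialOrder β] (𝒯 : Finset β) :
    ∃ 𝒦 ⊆ 𝒯, IsChain (· ≤ ·) (𝒦 : Set β) ∧ ∀ z ∈ 𝒯, (∀ p ∈ 𝒦, p ≤ z ∨ z ≤ p) → z ∈ 𝒦 := by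
  classical
  obtain ⟨𝒦, h𝒦, hmax⟩ := Finset.exists_max_image
    (𝒯.powerset.filter fun 𝒦 : Finset β => IsChain (· ≤ ·) (𝒦 : Set β)) Finset.card
    ⟨∅, by simp⟩
  simp only [Finset.mem_filter, Finset.mem_powerset] at h𝒦 hmax
  refine ⟨𝒦, h𝒦.1, h𝒦.2, fun z hz hcomp => by_contra fun hz𝒦 => ?_⟩
  have hchain : IsChain (· ≤ ·) ((insert z 𝒦 : Finset β) : Set β) := by
    rw [Finset.coe_insert]
    exact h𝒦.2.insert fun p hp _ => (hcomp p hp).symm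
  have := hmax _ ⟨Finset.insert_subset hz h𝒦.1, hchain⟩
  rw [Finset.card_insert_of_notMem hz𝒦] at this
  omega

theorem IsChain.subset_of_card_le {α : Type*} {𝒦 : Set (Finset α)} (h : IsChain (· ⊆ ·) 𝒦)
    {P Q : Finset α} (hP : P ∈ 𝒦) (hQ : Q ∈ 𝒦) (hcard : P.card ≤ Q.card) : P ⊆ Q := by
  rcases h.total hP hQ with hPQ | hQP
  · exact hPQ
  · exact (Finset.eq_of_subset_of_card_le hQP hcard).ge

/-- Greedy choice among intervals `[a i, b i]`: repeatedly take the interval ending first and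
discard the at most `k` intervals that reach its right end. -/
theorem Finset.exists_separated_intervals {ι β : Type*} [LinearOrder β] {k : ℕ} (a b : ι → β) :
    ∀ (q : ℕ) (F : Finset ι), (∀ i ∈ F, (F.filter fun j => a j ≤ b i ∧ b i ≤ b j).card ≤ k) →
      q * (k + 1) ≤ F.card →
      ∃ f : Fin q → ι, (∀ x, f x ∈ F) ∧ ∀ x y, x < y → b (f x) < a (f y)
  | 0, _, _, _ => ⟨Fin.elim0, fun x => x.elim0, fun x => x.elim0⟩
  | q + 1, F, hdepth, hcard => by
    have hF : F.Nonempty := Finset.card_pos.1 (by nlinarith)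
    obtain ⟨i₀, hi₀, hi₀_min⟩ := Finset.exists_min_image F b hF
    let F' := F.filter fun j => b i₀ < a j
    have hcover : F.card ≤ F'.card + k := by
      calc F.card = F'.card + (F.filter fun j => ¬ b i₀ < a j).card :=
            (Finset.card_filter_add_card_filter_not _).symm
        _ ≤ F'.card + k := by
          refine Nat.add_le_add_left ((Finset.card_le_card fun j hj => ?_).trans (hdepth i₀ hi₀)) _
          simp only [Finset.mem_filter, not_lt] at hj ⊢
          exact ⟨hj.1, hj.2, hi₀_min j hj.1⟩
    have hdepth' : ∀ i ∈ F', (F'.filter fun j => a j ≤ b i ∧ b i ≤ b j).card ≤ k := fun i hi =>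
      (Finset.card_le_card (Finset.filter_subset_filter _ (Finset.filter_subset _ F))).trans
        (hdepth i (Finset.mem_of_mem_filter i hi))
    obtain ⟨f, hfF', hf⟩ := Finset.exists_separated_intervals a b q F' hdepth' (by nlinarith)
    refine ⟨Fin.cons i₀ f, Fin.cases hi₀ fun x => Finset.mem_of_mem_filter _ (hfF' x), ?_⟩
    intro x y hxy
    induction y using Fin.cases with
    | zero => exact absurd hxy (Fin.not_lt_zero x)
    | succ y =>
      induction x using Fin.cases with
      | zero => exact (Finset.mem_filter.1 (hfF' y)).2
      | succ x => exact hf x y (Fin.succ_lt_succ_iff.1 hxy)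

theorem StrictMonoOn.insert_of_forall_lt {α β : Type*} [Preorder α] [Preorder β] {f : α → β}
    {s : Set α} (hf : StrictMonoOn f s) {a : α} (ha : ∀ b ∈ s, a < b ∧ f a < f b) :
    StrictMonoOn f (insert a s) := by
  rintro x (rfl | hx) y (rfl | hy) hxy
  · exact absurd hxy (lt_irrefl _)
  · exact (ha y hy).2
  · exact absurd (hxy.trans (ha x hx).1) (lt_irrefl _)
  · exact hf hx hy hxy

theorem StrictAntiOn.insert_of_forall_lt {α β : Type*} [Preorder α] [Preorder β] {f : α → β}
    {s : Set α} (hf : StrictAntiOn f s) {a : α} (ha : ∀ b ∈ s, a < b ∧ f b < f a) :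
    StrictAntiOn f (insert a s) :=
  StrictMonoOn.insert_of_forall_lt (β := βᵒᵈ) hf ha

/-- Erdős–Szekeres with the bound `2 ^ (a + b)`, by splitting at the first element. -/
theorem Finset.exists_strictMonoOn_or_strictAntiOn {ι β : Type*} [LinearOrder ι] [LinearOrder β]
    {σ : ι → β} : ∀ (a b : ℕ) (s : Finset ι), Set.InjOn σ s → 2 ^ (a + b) ≤ s.card →
      (∃ t ⊆ s, t.card = a ∧ StrictMonoOn σ t) ∨ (∃ t ⊆ s, t.card = b ∧ StrictAntiOn σ t)
  | 0, _, _, _, _ => .inl ⟨∅, by simp, by simp, fun _ h => by simp at h⟩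
  | _ + 1, 0, _, _, _ => .inr ⟨∅, by simp, by simp, fun _ h => by simp at h⟩
  | a + 1, b + 1, s, hσ, hs => by
    have hne : s.Nonempty := Finset.card_pos.1 (lt_of_lt_of_le (Nat.two_pow_pos _) hs)
    let i₀ := s.min' hne
    let A := s.filter fun i => σ i₀ < σ i
    let B := s.filter fun i => σ i < σ i₀
    have hi₀s : i₀ ∈ s := s.min'_mem hne
    have hi₀ : ∀ i ∈ s, i ≠ i₀ → i₀ < i := fun i hi hne => lt_of_le_of_ne (s.min'_le i hi) hne.symm
    have hAB : s.card ≤ A.card + (B.card + 1) := by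
      calc s.card = A.card + (s.filter fun i => ¬ σ i₀ < σ i).card :=
            (Finset.card_filter_add_card_filter_not _).symm
        _ ≤ A.card + (insert i₀ B).card := by
          refine Nat.add_le_add_left (Finset.card_le_card fun i hi => ?_) _
          simp only [Finset.mem_filter, not_lt] at hi
          rcases hi.2.lt_or_eq with hlt | heq
          · exact Finset.mem_insert_of_mem (Finset.mem_filter.2 ⟨hi.1, hlt⟩)
          · exact Finset.mem_insert.2 (.inl (hσ hi.1 hi₀s heq))
        _ ≤ A.card + (B.card + 1) := Nat.add_le_add_left (Finset.card_insert_le _ _) _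
    have hsplit : 2 ^ (a + (b + 1)) ≤ A.card ∨ 2 ^ ((a + 1) + b) ≤ B.card := by
      by_contra! h
      have : 2 ^ (a + 1 + (b + 1)) = 2 ^ (a + (b + 1)) + 2 ^ (a + 1 + b) := by ring
      omega
    rcases hsplit with hA | hB
    · rcases Finset.exists_strictMonoOn_or_strictAntiOn a (b + 1) A
        (hσ.mono (Finset.filter_subset _ s)) hA with ⟨t, htA, hta, ht⟩ | ⟨t, htA, htb, ht⟩
      · have hi₀t : i₀ ∉ t := fun h => lt_irrefl _ (Finset.mem_filter.1 (htA h)).2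
        refine .inl ⟨insert i₀ t, Finset.insert_subset hi₀s (htA.trans (Finset.filter_subset _ s)),
          by rw [Finset.card_insert_of_notMem hi₀t, hta], ?_⟩
        rw [Finset.coe_insert]
        refine ht.insert_of_forall_lt fun i hi => ⟨?_, (Finset.mem_filter.1 (htA hi)).2⟩
        exact hi₀ i (Finset.mem_filter.1 (htA hi)).1 (ne_of_mem_of_not_mem hi hi₀t)
      · exact .inr ⟨t, htA.trans (Finset.filter_subset _ s), htb, ht⟩
    · rcases Finset.exists_strictMonoOn_or_strictAntiOn (a + 1) b B
        (hσ.mono (Finset.filter_subset _ s)) hB with ⟨t, htB, hta, ht⟩ | ⟨t, htB, htb, ht⟩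
      · exact .inl ⟨t, htB.trans (Finset.filter_subset _ s), hta, ht⟩
      · have hi₀t : i₀ ∉ t := fun h => lt_irrefl _ (Finset.mem_filter.1 (htB h)).2
        refine .inr ⟨insert i₀ t, Finset.insert_subset hi₀s (htB.trans (Finset.filter_subset _ s)),
          by rw [Finset.card_insert_of_notMem hi₀t, htb], ?_⟩
        rw [Finset.coe_insert]
        refine ht.insert_of_forall_lt fun i hi => ⟨?_, (Finset.mem_filter.1 (htB hi)).2⟩
        exact hi₀ i (Finset.mem_filter.1 (htB hi)).1 (ne_of_mem_of_not_mem hi hi₀t)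

theorem exists_strictMono_comp_strictMono_or_strictAnti {β : Type*} [LinearOrder β] {n : ℕ}
    {σ : Fin n → β} (hσ : Function.Injective σ) (q : ℕ) (hn : 4 ^ q ≤ n) :
    ∃ τ : Fin q → Fin n, StrictMono τ ∧ (StrictMono (σ ∘ τ) ∨ StrictAnti (σ ∘ τ)) := by
  have hcard : 2 ^ (q + q) ≤ (Finset.univ : Finset (Fin n)).card := by
    rw [← two_mul, pow_mul]; simpa using hn
  have key := Finset.exists_strictMonoOn_or_strictAntiOn q q _ hσ.injOn hcard
  rcases key with ⟨t, -, ht, hσt⟩ | ⟨t, -, ht, hσt⟩ <;>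
    refine ⟨t.orderEmbOfFin ht, (t.orderEmbOfFin ht).strictMono, ?_⟩
  · exact .inl fun x y hxy => hσt (t.orderEmbOfFin_mem ht x) (t.orderEmbOfFin_mem ht y)
      ((t.orderEmbOfFin ht).strictMono hxy)
  · exact .inr fun x y hxy => hσt (t.orderEmbOfFin_mem ht x) (t.orderEmbOfFin_mem ht y)
      ((t.orderEmbOfFin ht).strictMono hxy)

namespace MDigraph

variable {α : Type}

theorem fst_mem_of_mem_cycleArcs {c : List α} {e : α × α} (he : e ∈ cycleArcs c) : e.1 ∈ c :=
  (List.of_mem_zip (show (e.1, e.2) ∈ c.zip (c.rotate 1) from he)).1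

theorem exists_mem_cycleArcs_fst {c : List α} {x : α} (hx : x ∈ c) :
    ∃ e ∈ cycleArcs c, e.1 = x := by
  have : x ∈ (c.zip (c.rotate 1)).map Prod.fst := by
    rwa [List.map_fst_zip (by simp)]
  simpa [cycleArcs] using this

theorem IsDicycle.mem_verts {D : MDigraph α} {c : List α} (hc : D.IsDicycle c) {x : α}
    (hx : x ∈ c) : x ∈ D.verts := by
  obtain ⟨e, he, rfl⟩ := exists_mem_cycleArcs_fst hx
  exact D.tail_mem e (Multiset.mem_of_le hc.2.2 he)

theorem exists_mem_cycleArcs_leaving {p : α → Prop} {c : List α} {x y : α}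
    (hx : x ∈ c) (hpx : p x) (hy : y ∈ c) (hpy : ¬ p y) :
    ∃ e ∈ cycleArcs c, p e.1 ∧ ¬ p e.2 := by
  by_contra! h
  obtain ⟨a, t, rfl⟩ := List.exists_cons_of_ne_nil (List.ne_nil_of_mem hx)
  have : IsTrans α (fun u v => p u → p v) := ⟨fun _ _ _ huv hvw hu => hvw (huv hu)⟩
  have hchain : Cycle.Chain (fun u v => p u → p v) (a :: t : List α) := by
    rw [Cycle.chain_coe_cons]
    have hzip := List.zip_append (l₁ := a :: t) (r₁ := [a]) (l₂ := t ++ [a]) (r₂ := []) (by simp)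
    simp only [List.cons_append, List.append_nil, List.zip_nil_right] at hzip
    refine List.isChain_of_forall_mem_zip_tail fun e he => h e ?_
    simpa [cycleArcs, hzip] using he
  exact hpy (Cycle.chain_iff_pairwise.1 hchain x (by simpa using hx) y (by simpa using hy) hpx)

theorem forall_mem_of_not_properlyIntersects {U : Finset α} {c : List α}
    (h : ¬ ProperlyIntersects U c) {x : α} (hx : x ∈ c) (hxU : x ∈ U) : ∀ y ∈ c, y ∈ U := by
  by_contra! hy
  exact h ⟨⟨x, hx, hxU⟩, hy⟩

theorem forall_notMem_of_not_properlyIntersects {U : Finset α} {c : List α}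
    (h : ¬ ProperlyIntersects U c) {x : α} (hx : x ∈ c) (hxU : x ∉ U) : ∀ y ∈ c, y ∉ U :=
  fun y hy hyU => h ⟨⟨y, hy, hyU⟩, ⟨x, hx, hxU⟩⟩

end MDigraph

open MDigraph in
theorem IsChain.exists_properlyIntersects_interval {α : Type} {𝒦 : Finset (Finset α)}
    (hchain : IsChain (· ⊆ ·) (𝒦 : Set (Finset α))) {c : List α}
    (h : ∃ P ∈ 𝒦, ProperlyIntersects P c) :
    ∃ lo ∈ 𝒦, ∃ hi ∈ 𝒦, ProperlyIntersects lo c ∧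
      (∀ P ∈ 𝒦, P.card < lo.card → ∀ z ∈ c, z ∉ P) ∧
      (∀ P ∈ 𝒦, hi.card < P.card → ∀ z ∈ c, z ∈ P) ∧
      (∀ P ∈ 𝒦, lo.card ≤ P.card → P.card ≤ hi.card → ProperlyIntersects P c) := by
  classical
  have hne : (𝒦.filter (ProperlyIntersects · c)).Nonempty := by simpa [Finset.Nonempty] using h
  obtain ⟨lo, hlo, hlo_min⟩ := Finset.exists_min_image _ Finset.card hne
  obtain ⟨hi, hhi, hhi_max⟩ := Finset.exists_max_image _ Finset.card hne
  simp only [Finset.mem_filter] at hlo hhi hlo_min hhi_max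
  obtain ⟨⟨x, hx, hxhi⟩, -⟩ := hhi.2
  obtain ⟨-, ⟨y, hy, hylo⟩⟩ := hlo.2
  refine ⟨lo, hlo.1, hi, hhi.1, hlo.2, fun P hP hlt => ?_, fun P hP hlt => ?_, fun P hP h1 h2 => ?_⟩
  · have hPc : ¬ ProperlyIntersects P c := fun hPc => by linarith [hlo_min P ⟨hP, hPc⟩]
    exact forall_notMem_of_not_properlyIntersects hPc hy
      (fun hyP => hylo (hchain.subset_of_card_le hP hlo.1 hlt.le hyP))
  · have hPc : ¬ ProperlyIntersects P c := fun hPc => by linarith [hhi_max P ⟨hP, hPc⟩]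
    exact forall_mem_of_not_properlyIntersects hPc hx
      (hchain.subset_of_card_le hhi.1 hP hlt.le hxhi)
  · obtain ⟨⟨x', hx', hx'lo⟩, -⟩ := hlo.2
    obtain ⟨-, ⟨y', hy', hy'hi⟩⟩ := hhi.2
    exact ⟨⟨x', hx', hchain.subset_of_card_le hlo.1 hP h1 hx'lo⟩,
      ⟨y', hy', fun hy'P => hy'hi (hchain.subset_of_card_le hP hhi.1 h2 hy'P)⟩⟩

namespace MDigraph

variable {α : Type} [DecidableEq α]

section

variable (D : MDigraph α)

theorem outDegOf_eq_countP (U : Finset α) :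
    D.outDegOf U = D.arcs.countP (fun e => e.1 ∈ U ∧ e.2 ∉ U) :=
  (Multiset.countP_eq_card_filter _ _).symm

theorem outDegOf_inter_add_outDegOf_union_le (X Y : Finset α) :
    D.outDegOf (X ∩ Y) + D.outDegOf (X ∪ Y) ≤ D.outDegOf X + D.outDegOf Y := by
  simp only [outDegOf_eq_countP]
  induction D.arcs using Multiset.induction_on with
  | empty => simp
  | cons e s ih =>
    simp only [Multiset.countP_cons, Finset.mem_inter, Finset.mem_union]
    by_cases e.1 ∈ X <;> by_cases e.1 ∈ Y <;> by_cases e.2 ∈ X <;> by_cases e.2 ∈ Y <;>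
      simp_all <;> omega

theorem outDegOf_inter_verts (U : Finset α) : D.outDegOf (U ∩ D.verts) = D.outDegOf U := by
  simp only [outDegOf_eq_countP]
  refine Multiset.countP_congr rfl fun e he => ?_
  simp [D.tail_mem e he, D.head_mem e he]

theorem card_le_outDegOf {ι : Type*} {F : Finset ι} {A : ι → Multiset (α × α)} {U : Finset α}
    (hA : ∑ i ∈ F, A i ≤ D.arcs) (hleave : ∀ i ∈ F, ∃ e ∈ A i, e.1 ∈ U ∧ e.2 ∉ U) :
    F.card ≤ D.outDegOf U := by
  let leaves : α × α → Prop := fun e => e.1 ∈ U ∧ e.2 ∉ U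
  calc F.card = ∑ _i ∈ F, 1 := by simp
    _ ≤ ∑ i ∈ F, (A i).countP leaves :=
      Finset.sum_le_sum fun i hi => Multiset.countP_pos.2 (hleave i hi)
    _ = (∑ i ∈ F, A i).countP leaves := (map_sum (Multiset.countPAddMonoidHom leaves) A F).symm
    _ ≤ D.arcs.countP leaves := Multiset.countP_le_of_le _ hA
    _ = D.outDegOf U := (D.outDegOf_eq_countP U).symm

end

variable {D : MDigraph α} {r s : α} {k : ℕ}

theorem HasArcDisjointPaths.le_outDegOf (h : D.HasArcDisjointPaths r s k)
    {U : Finset α} (hr : r ∈ U) (hs : s ∉ U) : k ≤ D.outDegOf U := by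
  obtain ⟨P, hP, hle⟩ := h
  simpa using D.card_le_outDegOf (F := Finset.univ) hle fun i _ =>
    List.exists_mem_zip_tail_leaving (p := (· ∈ U)) (hP i).2.1 hr
      (List.mem_of_getLast? (hP i).2.2.1) hs

theorem IsTightCut.inter_and_union (h : D.HasArcDisjointPaths r s k)
    {U V : Finset α} (hU : D.IsTightCut r s k U) (hV : D.IsTightCut r s k V) :
    D.IsTightCut r s k (U ∩ V) ∧ D.IsTightCut r s k (U ∪ V) := by
  obtain ⟨hrU, hsU, hkU⟩ := hU
  obtain ⟨hrV, hsV, hkV⟩ := hV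
  have hinter := h.le_outDegOf (U := U ∩ V) (by simp [hrU, hrV]) (by simp [hsU])
  have hunion := h.le_outDegOf (U := U ∪ V) (by simp [hrU]) (by simp [hsU, hsV])
  have := D.outDegOf_inter_add_outDegOf_union_le U V
  exact ⟨⟨by simp [hrU, hrV], by simp [hsU], by omega⟩,
    ⟨by simp [hrU], by simp [hsU, hsV], by omega⟩⟩

theorem IsTightCut.inter_verts {U : Finset α} (hU : D.IsTightCut r s k U)
    (hr : r ∈ D.verts) : D.IsTightCut r s k (U ∩ D.verts) :=
  ⟨by simp [hU.1, hr], by simp [hU.2.1], by rw [outDegOf_inter_verts, hU.2.2]⟩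

theorem card_properlyIntersects_le {ι : Type*} {F : Finset ι} {C : ι → List α}
    (hcyc : ∀ i ∈ F, D.IsDicycle (C i))
    (hdisj : ∀ i ∈ F, ∀ j ∈ F, i ≠ j → ∀ x ∈ C i, x ∉ C j)
    {U : Finset α} (hU : ∀ i ∈ F, ProperlyIntersects U (C i)) : F.card ≤ D.outDegOf U := by
  refine D.card_le_outDegOf (A := fun i => cycleArcs (C i))
    (Multiset.finsetSum_le_of_pairwiseDisjoint (fun i hi => (hcyc i hi).2.2) ?_) fun i hi => ?_
  · intro i hi j hj hij
    refine Multiset.disjoint_left.2 fun he he' => ?_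
    exact hdisj i hi j hj hij _ (fst_mem_of_mem_cycleArcs he) (fst_mem_of_mem_cycleArcs he')
  · obtain ⟨⟨x, hx, hxU⟩, ⟨y, hy, hyU⟩⟩ := hU i hi
    exact exists_mem_cycleArcs_leaving (p := (· ∈ U)) hx hxU hy hyU

/-- `Z = (⋃ ℬ) ∪ (W ∩ ⋂ 𝒜)`, written with `sup'`/`inf'` over `insert` to avoid empty families. -/
theorem exists_mem_between {𝒯 : Set (Finset α)}
    (hinter : ∀ U ∈ 𝒯, ∀ V ∈ 𝒯, U ∩ V ∈ 𝒯) (hunion : ∀ U ∈ 𝒯, ∀ V ∈ 𝒯, U ∪ V ∈ 𝒯)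
    {W : Finset α} (hW : W ∈ 𝒯) {ℬ 𝒜 : Finset (Finset α)} (hℬ : ∀ B ∈ ℬ, B ∈ 𝒯)
    (h𝒜 : ∀ A ∈ 𝒜, A ∈ 𝒯) (hℬ𝒜 : ∀ B ∈ ℬ, ∀ A ∈ 𝒜, B ⊆ A) :
    ∃ Z ∈ 𝒯, (∀ B ∈ ℬ, B ⊆ Z) ∧ (∀ A ∈ 𝒜, Z ⊆ A) ∧
      (∀ x ∈ W, (∀ A ∈ 𝒜, x ∈ A) → x ∈ Z) ∧ ∀ y ∈ Z, y ∈ W ∨ ∃ B ∈ ℬ, y ∈ B := by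
  let T := (insert W 𝒜).inf' (Finset.insert_nonempty _ _) id
  have hTW : T ⊆ W := Finset.inf'_le id (Finset.mem_insert_self W 𝒜)
  have hTA : ∀ A ∈ 𝒜, T ⊆ A := fun A hA => Finset.inf'_le id (Finset.mem_insert_of_mem hA)
  have hT : T ∈ 𝒯 := Finset.inf'_mem 𝒯 hinter _ _ _ fun P hP => by
    rcases Finset.mem_insert.1 hP with rfl | hP
    exacts [hW, h𝒜 P hP]
  refine ⟨(insert T ℬ).sup' (Finset.insert_nonempty _ _) id, ?_, fun B hB => ?_, fun A hA => ?_,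
    fun x hxW hx𝒜 => ?_, fun y hy => ?_⟩
  · refine Finset.sup'_mem 𝒯 hunion _ _ _ fun P hP => ?_
    rcases Finset.mem_insert.1 hP with rfl | hP
    exacts [hT, hℬ P hP]
  · exact Finset.le_sup' id (Finset.mem_insert_of_mem hB)
  · refine Finset.sup'_le _ _ fun P hP => ?_
    rcases Finset.mem_insert.1 hP with rfl | hP
    exacts [hTA A hA, hℬ𝒜 P hP A hA]
  · refine Finset.le_sup' id (Finset.mem_insert_self T ℬ) ?_
    refine Finset.singleton_subset_iff.1
      (Finset.le_inf' (Finset.insert_nonempty _ _) id fun P hP => ?_)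
    rcases Finset.mem_insert.1 hP with rfl | hP
    exacts [by simpa using hxW, by simpa using hx𝒜 P hP]
  · obtain ⟨P, hP, hyP⟩ := Finset.mem_sup.1
      (show y ∈ (insert T ℬ).sup id by rwa [← Finset.sup'_eq_sup (Finset.insert_nonempty _ _)])
    rcases Finset.mem_insert.1 hP with rfl | hP
    exacts [.inl (hTW hyP), .inr ⟨P, hP, hyP⟩]

theorem exists_mem_maximal_chain_properlyIntersects {𝒯 : Set (Finset α)}
    (hinter : ∀ U ∈ 𝒯, ∀ V ∈ 𝒯, U ∩ V ∈ 𝒯) (hunion : ∀ U ∈ 𝒯, ∀ V ∈ 𝒯, U ∪ V ∈ 𝒯)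
    {𝒦 : Finset (Finset α)} (h𝒦 : ∀ P ∈ 𝒦, P ∈ 𝒯)
    (hchain : IsChain (· ⊆ ·) (𝒦 : Set (Finset α)))
    (hmax : ∀ Z ∈ 𝒯, (∀ P ∈ 𝒦, P ⊆ Z ∨ Z ⊆ P) → Z ∈ 𝒦)
    {W : Finset α} (hW : W ∈ 𝒯) {c : List α} (hWc : ProperlyIntersects W c) :
    ∃ P ∈ 𝒦, ProperlyIntersects P c := by
  by_contra! hnone
  obtain ⟨⟨x, hx, hxW⟩, ⟨y, hy, hyW⟩⟩ := hWc
  let below := 𝒦.filter fun P => ∀ z ∈ c, z ∉ P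
  let above := 𝒦.filter fun P => ∀ z ∈ c, z ∈ P
  have hsplit : ∀ P ∈ 𝒦, P ∈ below ∨ P ∈ above := by
    intro P hP
    by_cases hxP : x ∈ P
    · exact .inr (Finset.mem_filter.2
        ⟨hP, forall_mem_of_not_properlyIntersects (hnone P hP) hx hxP⟩)
    · exact .inl (Finset.mem_filter.2
        ⟨hP, forall_notMem_of_not_properlyIntersects (hnone P hP) hx hxP⟩)
  have hbelow_above : ∀ B ∈ below, ∀ A ∈ above, B ⊆ A := fun B hB A hA =>
    (hchain.total (Finset.mem_filter.1 hB).1 (Finset.mem_filter.1 hA).1).resolve_right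
      fun hAB => (Finset.mem_filter.1 hB).2 x hx (hAB ((Finset.mem_filter.1 hA).2 x hx))
  obtain ⟨Z, hZ, hbelowZ, hZabove, hxZ, hyZ⟩ := exists_mem_between hinter hunion hW
    (fun B hB => h𝒦 B (Finset.mem_filter.1 hB).1) (fun A hA => h𝒦 A (Finset.mem_filter.1 hA).1)
    hbelow_above
  have hZ𝒦 : Z ∈ 𝒦 := hmax Z hZ fun P hP =>
    (hsplit P hP).imp (hbelowZ P) (hZabove P)
  refine hnone Z hZ𝒦 ⟨⟨x, hx, hxZ x hxW fun A hA => (Finset.mem_filter.1 hA).2 x hx⟩,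
    ⟨y, hy, fun hyZ' => ?_⟩⟩
  rcases hyZ y hyZ' with hyW' | ⟨B, hB, hyB⟩
  exacts [hyW hyW', (Finset.mem_filter.1 hB).2 y hy hyB]

theorem IsOrderedSeq.comp_strictMono {n q : ℕ} {E : Fin n → List α}
    (h : D.IsOrderedSeq r s k E) {τ : Fin q → Fin n} (hτ : StrictMono τ) :
    D.IsOrderedSeq r s k (fun x => E (τ x)) := by
  obtain ⟨U, htight, hbefore, hafter, hproper⟩ := h
  exact ⟨fun x => U (τ x), fun _ => htight _, fun _ _ hxy => hbefore _ _ (hτ hxy),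
    fun _ _ hxy => hafter _ _ (hτ hxy), fun _ => hproper _⟩

theorem isOrderedSeq_or_rev_comp {n q : ℕ} {E : Fin n → List α}
    (h : D.IsOrderedSeq r s k E ∨ D.IsOrderedSeq r s k (fun x => E x.rev))
    {τ : Fin q → Fin n} (hτ : StrictMono τ ∨ StrictAnti τ) :
    D.IsOrderedSeq r s k (fun x => E (τ x)) ∨ D.IsOrderedSeq r s k (fun x => E (τ x.rev)) := by
  rcases h with h | h <;> rcases hτ with hτ | hτ
  · exact .inl (h.comp_strictMono hτ)
  · exact .inr (h.comp_strictMono (hτ.comp Fin.rev_strictAnti))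
  · right
    simpa only [Function.comp_apply, Fin.rev_rev] using
      h.comp_strictMono (Fin.rev_strictAnti.comp (hτ.comp_strictAnti Fin.rev_strictAnti))
  · left
    simpa only [Function.comp_apply, Fin.rev_rev] using
      h.comp_strictMono (Fin.rev_strictAnti.comp hτ)

theorem exists_tight_chain_properlyIntersects_essential (hr : r ∈ D.verts)
    (hpaths : D.HasArcDisjointPaths r s k) :
    ∃ 𝒦 : Finset (Finset α), (∀ P ∈ 𝒦, D.IsTightCut r s k P) ∧
      IsChain (· ⊆ ·) (𝒦 : Set (Finset α)) ∧ ∀ c : List α, (∀ x ∈ c, x ∈ D.verts) →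
        D.IsEssential r s k c → ∃ P ∈ 𝒦, ProperlyIntersects P c := by
  classical
  let 𝒯 := D.verts.powerset.filter (D.IsTightCut r s k)
  have hmem𝒯 : ∀ U, U ∈ 𝒯 ↔ U ⊆ D.verts ∧ D.IsTightCut r s k U := by simp [𝒯]
  obtain ⟨𝒦, h𝒦𝒯, hchain, hmax⟩ := 𝒯.exists_maximal_isChain
  refine ⟨𝒦, fun P hP => ((hmem𝒯 P).1 (h𝒦𝒯 hP)).2, hchain, fun c hc ⟨W, hW, hWc⟩ => ?_⟩
  obtain ⟨⟨x, hx, hxW⟩, ⟨y, hy, hyW⟩⟩ := hWc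
  refine exists_mem_maximal_chain_properlyIntersects (𝒯 := 𝒯) ?_ ?_ h𝒦𝒯 hchain hmax
    (W := W ∩ D.verts) ((hmem𝒯 _).2 ⟨Finset.inter_subset_right, hW.inter_verts hr⟩)
    ⟨⟨x, hx, Finset.mem_inter.2 ⟨hxW, hc x hx⟩⟩, ⟨y, hy, fun hy' => hyW (Finset.mem_inter.1 hy').1⟩⟩
  · intro U hU V hV
    rw [Finset.mem_coe, hmem𝒯] at hU hV ⊢
    exact ⟨Finset.inter_subset_left.trans hU.1, (hU.2.inter_and_union hpaths hV.2).1⟩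
  · intro U hU V hV
    rw [Finset.mem_coe, hmem𝒯] at hU hV ⊢
    exact ⟨Finset.union_subset hU.1 hV.1, (hU.2.inter_and_union hpaths hV.2).2⟩

theorem exists_isOrderedSeq (hr : r ∈ D.verts) (hpaths : D.HasArcDisjointPaths r s k)
    {q m : ℕ} {C : Fin m → List α} (hcyc : ∀ i, D.IsDicycle (C i))
    (hess : ∀ i, D.IsEssential r s k (C i)) (hdisj : ∀ i j, i ≠ j → ∀ x ∈ C i, x ∉ C j)
    (hm : q * (k + 1) ≤ m) :
    ∃ g : Fin q → Fin m, Function.Injective g ∧ D.IsOrderedSeq r s k (fun x => C (g x)) := by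
  obtain ⟨𝒦, htight, hchain, hsplit⟩ :=
    exists_tight_chain_properlyIntersects_essential hr hpaths
  choose lo hlo hi hhi hlo_proper hbefore hafter hbetween using fun i =>
    hchain.exists_properlyIntersects_interval (hsplit (C i) (fun _ => (hcyc i).mem_verts) (hess i))
  have hlo_le_hi : ∀ i, (lo i).card ≤ (hi i).card := fun i => not_lt.1 fun hlt =>
    let ⟨y, hy, hylo⟩ := (hlo_proper i).2
    hylo (hafter i (lo i) (hlo i) hlt y hy)
  -- `hi i` properly intersects every cycle whose interval reaches its right end.
  have hdepth : ∀ i ∈ Finset.univ, (Finset.univ.filter fun j =>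
      (lo j).card ≤ (hi i).card ∧ (hi i).card ≤ (hi j).card).card ≤ k := fun i _ =>
    (htight _ (hhi i)).2.2 ▸ card_properlyIntersects_le (fun j _ => hcyc j)
      (fun j _ j' _ hjj' => hdisj j j' hjj') fun j hj =>
        hbetween j (hi i) (hhi i) (Finset.mem_filter.1 hj).2.1 (Finset.mem_filter.1 hj).2.2
  obtain ⟨f, -, hf⟩ := Finset.exists_separated_intervals (fun i => (lo i).card)
    (fun i => (hi i).card) q Finset.univ hdepth (by simpa using hm)
  have hmono : StrictMono fun x => (lo (f x)).card := fun x y hxy =>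
    (hlo_le_hi (f x)).trans_lt (hf x y hxy)
  refine ⟨f, Function.Injective.of_comp (f := fun i => (lo i).card) hmono.injective,
    fun x => lo (f x), fun x => htight _ (hlo _), fun x y hxy => hafter _ _ (hlo _) (hf x y hxy),
    fun x y hyx => ?_, fun x => hlo_proper _⟩
  exact hbefore _ _ (hlo _) ((hlo_le_hi (f y)).trans_lt (hf y x hyx))

/-- Each terminal costs a factor `4 ^ q` for Erdős–Szekeres and a factor `k + 1` for the greedy
choice among intervals. -/
def orderedCyclesBound (k : ℕ) : ℕ → ℕ → ℕ
  | 0, q => q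
  | t + 1, q => orderedCyclesBound k t (4 ^ q * (k + 1))

theorem exists_isOrderedSeq_or_rev (hr : r ∈ D.verts) (S : Finset α)
    (hS : D.SteinerRooted r S k) (q : ℕ) {m : ℕ} {C : Fin m → List α}
    (hcyc : ∀ i, D.IsDicycle (C i)) (hess : ∀ i, ∀ s ∈ S, D.IsEssential r s k (C i))
    (hdisj : ∀ i j, i ≠ j → ∀ x ∈ C i, x ∉ C j) (hm : orderedCyclesBound k S.card q ≤ m) :
    ∃ g : Fin q → Fin m, Function.Injective g ∧ ∀ s ∈ S,
      D.IsOrderedSeq r s k (fun x => C (g x)) ∨ D.IsOrderedSeq r s k (fun x => C (g x.rev)) := by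
  induction S using Finset.induction_on generalizing q with
  | empty =>
    replace hm : q ≤ m := hm
    exact ⟨Fin.castLE hm, Fin.castLE_injective hm, by simp⟩
  | insert s₀ S hs₀ ih =>
    rw [Finset.card_insert_of_notMem hs₀] at hm
    obtain ⟨g, hg, hgS⟩ := ih (fun s hs => hS s (Finset.mem_insert_of_mem hs)) (4 ^ q * (k + 1))
      (fun i s hs => hess i s (Finset.mem_insert_of_mem hs)) hm
    obtain ⟨σ, hσ, hσs₀⟩ := exists_isOrderedSeq hr (hS s₀ (Finset.mem_insert_self s₀ S))
      (C := fun x => C (g x)) (fun _ => hcyc _) (fun _ => hess _ s₀ (Finset.mem_insert_self s₀ S))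
      (fun i j hij => hdisj _ _ (hg.ne hij)) le_rfl
    obtain ⟨τ, hτ, hστ⟩ := exists_strictMono_comp_strictMono_or_strictAnti hσ q le_rfl
    refine ⟨g ∘ σ ∘ τ, hg.comp (hσ.comp hτ.injective), fun s hs => ?_⟩
    rcases Finset.mem_insert.1 hs with rfl | hs
    · exact isOrderedSeq_or_rev_comp (.inl hσs₀) (.inl hτ)
    · exact isOrderedSeq_or_rev_comp (hgS s hs) hστ

end MDigraph

theorem ordered_cycles_many_terminals_general (q k t : ℕ) :
    ∃ N : ℕ, ∀ (α : Type) [DecidableEq α] (D : MDigraph α) (r : α) (S : Finset α),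
      r ∉ S → S.card = t → r ∈ D.verts → ↑S ⊆ (D.verts : Set α) →
      D.SteinerRooted r S k →
      ∀ (m : ℕ) (C : Fin m → List α),
        N ≤ m →
        (∀ i, D.IsDicycle (C i)) →
        (∀ i, ∀ s ∈ S, D.IsEssential r s k (C i)) →
        (∀ i j, i ≠ j → ∀ x ∈ C i, x ∉ C j) →
        ∃ g : Fin q → Fin m, Function.Injective g ∧
          ∀ s ∈ S,
            D.IsOrderedSeq r s k (fun i => C (g i)) ∨
            D.IsOrderedSeq r s k (fun i => C (g i.rev)) := by
  refine ⟨MDigraph.orderedCyclesBound k t q, ?_⟩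
  intro α _ D r S _ hcard hr _ hS m C hm hcyc hess hdisj
  exact MDigraph.exists_isOrderedSeq_or_rev hr S hS q hcyc hess hdisj (hcard ▸ hm)

/-- For all positive integers `q`, `k` and `t` there is a constant
`N` such that: in every Steiner rooted `k`-arc-connected directed graph with root `r`
and `t` terminals `S`, every family of at least `N` pairwise vertex-disjoint directed
cycles, each `s`-essential for every `s ∈ S`, contains `q` cycles such that for every
`s ∈ S` either this sequence or its reverse is `s`-ordered. -/
theorem ordered_cycles_many_terminals (q k t : ℕ) (hq : 0 < q) (hk : 0 < k)
    (ht : 0 < t) :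
    ∃ N : ℕ, ∀ (α : Type) [DecidableEq α] (D : MDigraph α) (r : α) (S : Finset α),
      r ∉ S → S.card = t → r ∈ D.verts → ↑S ⊆ (D.verts : Set α) →
      D.SteinerRooted r S k →
      ∀ (m : ℕ) (C : Fin m → List α),
        N ≤ m →
        (∀ i, D.IsDicycle (C i)) →
        (∀ i, ∀ s ∈ S, D.IsEssential r s k (C i)) →
        (∀ i j, i ≠ j → ∀ x ∈ C i, x ∉ C j) →
        ∃ g : Fin q → Fin m, Function.Injective g ∧
          ∀ s ∈ S,
            D.IsOrderedSeq r s k (fun i => C (g i)) ∨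
            D.IsOrderedSeq r s k (fun i => C (g i.rev)) :=
  ordered_cycles_many_terminals_general q k t
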